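/- For m, n ≥ 1 with n = m + j (j ≥ 0) and 0 ≤ k < m, the explicit formula holds: -∫_D ψ_{j,k} ∇u_m · conj(∇u_n) dx = -(1/√π) · √(j+2k+1)/(m+j+k) · ∏_{i=1}^{k} (m-i)/(j+m+k-i), where u_m(r,θ) = (1/(√(2π) m)) r^m e^{imθ}. -/

import Mathlib

open Real Complex MeasureTheory ComplexConjugate

/-- The Zernike radial function `R^{j}_{j+2k}`. -/
noncomputable def zernikeR (j k : ℕ) (r : ℝ) : ℝ :=
  ∑ i ∈ Finset.range (k + 1),
    (-1 : ℝ) ^ i * (Nat.choose (j + 2 * k - i) i) *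
      (Nat.choose (j + 2 * k - 2 * i) (k - i)) * r ^ (j + 2 * k - 2 * i)

/-- The Zernike polynomial `ψ_{j,k}` in polar coordinates. -/
noncomputable def zernikePsi (j : ℤ) (k : ℕ) (r θ : ℝ) : ℂ :=
  (Real.sqrt ((j.natAbs + 2 * k + 1) / π) : ℝ) * (zernikeR j.natAbs k r : ℝ) *
    Complex.exp (Complex.I * j * θ)

/-- The grounded harmonic extension `u_m(r,θ) = (1/(√(2π)|m|)) r^{|m|} e^{imθ}`
of the Fourier Neumann datum `f_m`, in polar coordinates. -/
noncomputable def upol (m : ℤ) (r θ : ℝ) : ℂ :=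
  (1 / ((Real.sqrt (2 * π) : ℝ) * (m.natAbs : ℝ)) : ℝ) * (r : ℂ) ^ (m.natAbs) *
    Complex.exp (Complex.I * m * θ)

/-- `∇u_m ⋅ conj(∇u_n)` in polar coordinates:
`∂_r u_m conj(∂_r u_n) + (1/r²) ∂_θ u_m conj(∂_θ u_n)`. -/
noncomputable def gradDotPolar (m n : ℤ) (r θ : ℝ) : ℂ :=
  deriv (fun s : ℝ => upol m s θ) r * conj (deriv (fun s : ℝ => upol n s θ) r) +
    (1 / (r : ℂ) ^ 2) * deriv (fun t : ℝ => upol m r t) θ *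
      conj (deriv (fun t : ℝ => upol n r t) θ)

/-- The `(m,n)` matrix element `a_{m,n}(η) = -∫_D η ∇u_m ⋅ conj(∇u_n) dx` of the
linearized forward map, written as a polar double integral. -/
noncomputable def amat (m n : ℤ) (η : ℝ → ℝ → ℂ) : ℂ :=
  -∫ r in (0:ℝ)..1, (∫ θ in (0:ℝ)..(2 * π), η r θ * gradDotPolar m n r θ) * (r : ℂ)

/-! For `r ≠ 0` the integrand `ψ_{j,k} ∇u_m · conj(∇u_{m+j})` does not depend on `θ`: the phases
`e^{ijθ} e^{imθ} e^{-i(m+j)θ}` cancel, leaving `√((j+2k+1)/π) R^j_{j+2k}(r) r^{2m+j-2} / π`.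
Integrating the radial polynomial term by term gives `½ ∑_{i ≤ k} c_i / (x - i)` with
`x = m + j + k` and `c_i` the coefficients of `R^j_{j+2k}`. Now `c_i = w_i Q(i)`, where `w_i` are
the Lagrange weights of the nodes `0, …, k` and `Q = ∏_{t=1}^k (X - (j+k+t))` has degree `k`, so
the sum is the partial fraction expansion of `Q(x) / ∏_{l=0}^k (x - l)`, which is the product in
the formula. -/

open Finset Polynomial Lagrange Nat

theorem Lagrange.eval_div_eval_nodal {F ι : Type*} [Field F] [DecidableEq ι] {s : Finset ι}
    {v : ι → F} {Q : F[X]} {x : F} (hvs : Set.InjOn v s) (hQ : Q.degree < #s)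
    (hx : ∀ i ∈ s, x ≠ v i) :
    Q.eval x / (nodal s v).eval x = ∑ i ∈ s, nodalWeight s v i * Q.eval (v i) / (x - v i) := by
  conv_lhs => rw [eq_interpolate hvs hQ, eval_interpolate_not_at_node _ hx,
    mul_div_cancel_left₀ _ (eval_nodal_not_at_node hx)]
  simp only [div_eq_mul_inv, mul_right_comm]

theorem Nat.prod_Icc_add_eq_descFactorial (a k : ℕ) :
    ∏ t ∈ Icc 1 k, (a + t) = (a + k).descFactorial k := by
  induction k with
  | zero => simp
  | succ k ih =>
    rw [prod_Icc_succ_top (by omega), ih, ← add_assoc, succ_descFactorial_succ, mul_comm]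

theorem Nat.choose_mul_choose_sub_mul_factorial {n i k : ℕ} (hik : i ≤ k) :
    n.choose i * (n - i).choose (k - i) * (i ! * (k - i)!) = n.descFactorial k := by
  rw [← descFactorial_mul_descFactorial hik, descFactorial_eq_factorial_mul_choose,
    descFactorial_eq_factorial_mul_choose]
  ring

theorem prod_erase_range_natCast_sub {R : Type*} [CommRing R] {i k : ℕ} (hi : i ≤ k) :
    ∏ l ∈ (range (k + 1)).erase i, ((i : R) - l) = (-1) ^ (k - i) * (i ! * (k - i)!) := by
  obtain ⟨d, rfl⟩ := Nat.exists_eq_add_of_le hi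
  rw [Nat.add_sub_cancel_left]
  clear hi
  induction d with
  | zero =>
    rw [range_add_one, erase_insert notMem_range_self, ← descFactorial_self,
      descFactorial_eq_prod_range, Nat.cast_prod]
    simp [prod_congr rfl fun l hl => Nat.cast_sub (R := R) (mem_range.mp hl).le]
  | succ d ih =>
    rw [range_add_one, erase_insert_of_ne (by omega), prod_insert (by simp), ← add_assoc, ih]
    push_cast [factorial_succ]
    ring

noncomputable def zernikeCoeff (j k i : ℕ) : ℝ :=
  (-1) ^ i * (Nat.choose (j + 2 * k - i) i) * (Nat.choose (j + 2 * k - 2 * i) (k - i))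

theorem zernikeR_eq_sum (j k : ℕ) (r : ℝ) :
    zernikeR j k r = ∑ i ∈ range (k + 1), zernikeCoeff j k i * r ^ (j + 2 * k - 2 * i) := rfl

theorem zernikeCoeff_eq_nodalWeight_mul {j k i : ℕ} (hi : i ≤ k) :
    zernikeCoeff j k i = nodalWeight (range (k + 1)) (Nat.cast : ℕ → ℝ) i *
      (nodal (Icc 1 k) fun t : ℕ => ((j + k + t : ℕ) : ℝ)).eval (i : ℝ) := by
  have hneg : ∀ t ∈ Icc 1 k, (i : ℝ) - ((j + k + t : ℕ) : ℝ) = -((j + k - i + t : ℕ) : ℝ) := by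
    intro t _
    push_cast [Nat.cast_sub (show i ≤ j + k by omega)]
    ring
  rw [nodalWeight, prod_inv_distrib, prod_erase_range_natCast_sub hi, eval_nodal,
    prod_congr rfl hneg, prod_neg, ← Nat.cast_prod, prod_Icc_add_eq_descFactorial, card_Icc,
    show j + k - i + k = j + 2 * k - i by omega, ← choose_mul_choose_sub_mul_factorial hi,
    show j + 2 * k - i - i = j + 2 * k - 2 * i by omega, zernikeCoeff,
    show (-1 : ℝ) ^ (k + 1 - 1) = (-1) ^ i * (-1) ^ (k - i) by rw [← pow_add]; congr 1; omega]
  push_cast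
  field_simp

theorem sum_zernikeCoeff_div {j k : ℕ} {x : ℝ} (hx : ∀ l ≤ k, x ≠ l) :
    ∑ i ∈ range (k + 1), zernikeCoeff j k i / (x - i) =
      (∏ t ∈ Icc 1 k, (x - (j + k + t))) / ∏ l ∈ range (k + 1), (x - l) := by
  have hdeg : (nodal (Icc 1 k) fun t : ℕ => ((j + k + t : ℕ) : ℝ)).degree < #(range (k + 1)) := by
    rw [degree_nodal, card_Icc, card_range]
    exact_mod_cast (by omega : k + 1 - 1 < k + 1)
  have hx' : ∀ l ∈ range (k + 1), x ≠ l := fun l hl => hx l (mem_range_succ_iff.mp hl)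
  have hpartial := Lagrange.eval_div_eval_nodal Nat.cast_injective.injOn hdeg hx'
  simp only [eval_nodal, Nat.cast_add] at hpartial
  rw [hpartial]
  refine sum_congr rfl fun i hi => ?_
  rw [zernikeCoeff_eq_nodalWeight_mul (mem_range_succ_iff.mp hi), eval_nodal]
  push_cast
  rfl

theorem integral_zernikeR_mul_pow (j k p : ℕ) :
    ∫ r in (0 : ℝ)..1, zernikeR j k r * r ^ p =
      ∑ i ∈ range (k + 1), zernikeCoeff j k i / ((j + 2 * k - 2 * i + p : ℕ) + 1) := by
  simp_rw [zernikeR_eq_sum, sum_mul, mul_assoc, ← pow_add]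
  rw [intervalIntegral.integral_finsetSum fun i _ => (by fun_prop : Continuous fun r : ℝ =>
    zernikeCoeff j k i * r ^ (j + 2 * k - 2 * i + p)).intervalIntegrable _ _]
  simp [integral_pow, div_eq_mul_inv]

theorem integral_zernikeR_mul_pow_eq_prod {j k m : ℕ} (hm : m ≠ 0) :
    ∫ r in (0 : ℝ)..1, zernikeR j k r * r ^ (2 * m + j - 1) =
      1 / (2 * ((m : ℝ) + j + k)) * ∏ i ∈ Icc 1 k, ((m : ℝ) - i) / ((j : ℝ) + m + k - i) := by
  obtain ⟨x, hx⟩ : ∃ x : ℝ, x = m + j + k := ⟨_, rfl⟩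
  have hden : ∀ i ∈ range (k + 1),
      (((j + 2 * k - 2 * i + (2 * m + j - 1) : ℕ) : ℝ) + 1) = (x - i) * 2 := by
    intro i hi
    have hi : i ≤ k := mem_range_succ_iff.mp hi
    rw [← Nat.cast_add_one, hx,
      show j + 2 * k - 2 * i + (2 * m + j - 1) + 1 = (m + j + k - i) * 2 by omega]
    push_cast [Nat.cast_sub (show i ≤ m + j + k by omega)]
    rfl
  have hnode : ∀ l ≤ k, x ≠ l := by
    intro l hl
    have : (l : ℝ) < x := by rw [hx]; exact_mod_cast (by omega : l < m + j + k)
    exact this.ne'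
  have hnum : ∏ t ∈ Icc 1 k, (x - (j + k + t)) = ∏ t ∈ Icc 1 k, ((m : ℝ) - t) :=
    prod_congr rfl fun t _ => by rw [hx]; ring
  have hnodal : ∏ l ∈ range (k + 1), (x - l) = x * ∏ t ∈ Icc 1 k, ((j : ℝ) + m + k - t) := by
    rw [prod_range_eq_mul_Ico _ (by omega : 0 < k + 1), Finset.Ico_add_one_right_eq_Icc,
      Nat.cast_zero, sub_zero]
    exact congrArg _ (prod_congr rfl fun t _ => by rw [hx]; ring)
  rw [integral_zernikeR_mul_pow, sum_congr rfl fun i hi => by rw [hden i hi, ← div_div],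
    ← sum_div, sum_zernikeCoeff_div hnode, hnum, hnodal, prod_div_distrib, ← hx]
  ring

theorem upol_natCast (m : ℕ) (r θ : ℝ) :
    upol m r θ = (Real.sqrt (2 * π) * m : ℂ)⁻¹ * (r : ℂ) ^ m * exp (I * m * θ) := by
  simp [upol]

theorem hasDerivAt_upol_radius {m : ℕ} (hm : m ≠ 0) (r θ : ℝ) :
    HasDerivAt (fun s : ℝ => upol m s θ)
      ((r : ℂ) ^ (m - 1) * exp (I * m * θ) / Real.sqrt (2 * π)) r := by
  simp_rw [upol_natCast]
  refine ((((hasDerivAt_pow m (r : ℂ)).comp_ofReal).const_mul _).mul_const _).congr_deriv ?_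
  field_simp

theorem hasDerivAt_upol_angle {m : ℕ} (hm : m ≠ 0) (r θ : ℝ) :
    HasDerivAt (fun t : ℝ => upol m r t)
      (I * (r : ℂ) ^ m * exp (I * m * θ) / Real.sqrt (2 * π)) θ := by
  simp_rw [upol_natCast]
  refine ((((hasDerivAt_id θ).ofReal_comp.const_mul (I * m)).cexp).const_mul _).congr_deriv ?_
  field_simp
  simp

theorem gradDotPolar_natCast {m n : ℕ} (hm : m ≠ 0) (hn : n ≠ 0) {r : ℝ} (hr : r ≠ 0) (θ : ℝ) :
    gradDotPolar m n r θ = (r : ℂ) ^ (m - 1) * (r : ℂ) ^ (n - 1) * exp (I * (m - n) * θ) / π := by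
  rw [gradDotPolar, (hasDerivAt_upol_radius hm r θ).deriv, (hasDerivAt_upol_radius hn r θ).deriv,
    (hasDerivAt_upol_angle hm r θ).deriv, (hasDerivAt_upol_angle hn r θ).deriv]
  obtain ⟨m, rfl⟩ := Nat.exists_eq_add_one_of_ne_zero hm
  obtain ⟨n, rfl⟩ := Nat.exists_eq_add_one_of_ne_zero hn
  have hexp : exp (I * (↑(m + 1) - ↑(n + 1)) * θ) =
      exp (I * ↑(m + 1) * θ) * conj (exp (I * ↑(n + 1) * θ)) := by
    rw [← exp_conj, ← Complex.exp_add]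
    congr 1
    simp only [map_mul, conj_I, map_natCast, conj_ofReal]
    ring
  simp only [map_mul, map_div₀, conj_ofReal, conj_I, map_pow, Nat.add_sub_cancel, hexp]
  have hr' : (r : ℂ) ≠ 0 := ofReal_ne_zero.mpr hr
  have hπ : (π : ℂ) = (Real.sqrt (2 * π) : ℂ) ^ 2 / 2 := by
    rw [← ofReal_pow, Real.sq_sqrt (by positivity)]
    push_cast
    ring
  rw [hπ]
  field_simp
  rw [I_sq]
  ring

theorem zernikePsi_mul_gradDotPolar {j k m : ℕ} (hm : m ≠ 0) {r : ℝ} (hr : r ≠ 0) (θ : ℝ) :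
    zernikePsi j k r θ * gradDotPolar m (m + j) r θ =
      ((Real.sqrt ((j + 2 * k + 1) / π) * zernikeR j k r * r ^ (2 * m + j - 2) / π : ℝ) : ℂ) := by
  rw [show (m : ℤ) + j = (m + j : ℕ) by push_cast; ring,
    gradDotPolar_natCast hm (by omega) hr, zernikePsi, Int.natAbs_natCast,
    show 2 * m + j - 2 = (m - 1) + (m + j - 1) by omega, pow_add]
  have hphase : exp (I * j * θ) * exp (I * (m - (m + j)) * θ) = 1 := by
    rw [← Complex.exp_add, ← Complex.exp_zero]
    ring_nf
  push_cast
  linear_combination (Real.sqrt ((j + 2 * k + 1) / π) * zernikeR j k r * r ^ (m - 1) *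
    r ^ (m + j - 1) / π : ℂ) * hphase

theorem integral_zernikePsi_mul_gradDotPolar_mul {j k m : ℕ} (hm : m ≠ 0) (r : ℝ) :
    (∫ θ in (0 : ℝ)..(2 * π), zernikePsi j k r θ * gradDotPolar m (m + j) r θ) * r =
      ((2 * Real.sqrt ((j + 2 * k + 1) / π) * (zernikeR j k r * r ^ (2 * m + j - 1)) : ℝ) : ℂ) := by
  rcases eq_or_ne r 0 with rfl | hr
  · simp [zero_pow (show 2 * m + j - 1 ≠ 0 by omega)]
  simp_rw [zernikePsi_mul_gradDotPolar hm hr, intervalIntegral.integral_const, sub_zero,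
    real_smul, show 2 * m + j - 1 = 2 * m + j - 2 + 1 by omega, pow_succ]
  push_cast
  field_simp

theorem amat_explicit_general (j k m : ℕ) (hm : 1 ≤ m) :
    amat (m : ℤ) ((m : ℤ) + (j : ℤ)) (zernikePsi (j : ℤ) k) =
      ((-(1 / Real.sqrt π) * Real.sqrt ((j : ℝ) + 2 * k + 1) / ((m : ℝ) + j + k) *
          ∏ i ∈ Finset.Icc 1 k, ((m : ℝ) - i) / ((j : ℝ) + m + k - i) : ℝ) : ℂ) := by
  have hm₀ : m ≠ 0 := Nat.one_le_iff_ne_zero.mp hm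
  simp_rw [amat, integral_zernikePsi_mul_gradDotPolar_mul hm₀, intervalIntegral.integral_ofReal,
    intervalIntegral.integral_const_mul, integral_zernikeR_mul_pow_eq_prod hm₀,
    Real.sqrt_div' _ pi_pos.le]
  push_cast
  field_simp

/-- The explicit formula for the matrix elements: for `m ≥ 1`, `j ≥ 0`, `n = m + j` and
`0 ≤ k < m`,
`-∫_D ψ_{j,k} ∇u_m ⋅ conj(∇u_n) dx
  = -(1/√π) √(j+2k+1)/(m+j+k) ∏_{i=1}^k (m-i)/(j+m+k-i)`. -/
theorem amat_explicit (j k m : ℕ) (hm : 1 ≤ m) (hk : k < m) :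
    amat (m : ℤ) ((m : ℤ) + (j : ℤ)) (zernikePsi (j : ℤ) k) =
      ((-(1 / Real.sqrt π) * Real.sqrt ((j : ℝ) + 2 * k + 1) / ((m : ℝ) + j + k) *
          ∏ i ∈ Finset.Icc 1 k, ((m : ℝ) - i) / ((j : ℝ) + m + k - i) : ℝ) : ℂ) :=
  amat_explicit_general j k m hm
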